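/- arXiv:1503.03787 — 2 statements merged into one kernel-verified Lean document; each statement's English description precedes it below -/
import Mathlib

section
/- Every decision problem in NP is solvable by an orchestrated machine OrchMach1 in polynomial time; i.e., NP ⊆ OM1P, where OM1P is the class of languages decided by some orchestrated machine with polynomially bounded accepting computations. This follows from the deterministic decomposition theorem: every polynomial-time NDTM is equivalent to the orchestrated machine built from its deterministic resolutions, and the simulation preserves computation length step-for-step. -/
abbrev Stt := ℕ
abbrev Dir := Fin 3

def moveInt (d : Dir) : ℤ := (d.val : ℤ) - 1

abbrev Rule (Γ : Type) := (Stt × Γ) × (Stt × Γ × Dir)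
abbrev Machine (Γ : Type) := Finset (Rule Γ)

structure Cfg (Γ : Type) where
  state : Stt
  tape : ℤ → Γ
  head : ℤ

def Cfg.F {Γ : Type} (c : Cfg Γ) : Stt × Γ := (c.state, c.tape c.head)

def applyRule {Γ : Type} (c : Cfg Γ) (T : Stt × Γ × Dir) : Cfg Γ :=
  ⟨T.1, Function.update c.tape c.head T.2.1, c.head + moveInt T.2.2⟩

def applicable {Γ : Type} [DecidableEq Γ] (F : Stt × Γ) (G : Machine Γ) : Prop :=
  ∃ r ∈ G, r.1 = F

instance {Γ : Type} [DecidableEq Γ] (F : Stt × Γ) (G : Machine Γ) :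
    Decidable (applicable F G) := by unfold applicable; infer_instance

def survivors {Γ : Type} [DecidableEq Γ] (p : Finset (Machine Γ) × Cfg Γ) :
    Finset (Machine Γ) :=
  p.1.filter (fun G => applicable p.2.F G)

def OrchStep {Γ : Type} [DecidableEq Γ] (p q : Finset (Machine Γ) × Cfg Γ) : Prop :=
  ∃ G ∈ survivors p, ∃ T, (p.2.F, T) ∈ G ∧ q = (survivors p, applyRule p.2 T)

def RunFrom {Γ : Type} [DecidableEq Γ] (H : Finset (Machine Γ)) (c0 : Cfg Γ)
    (f : ℕ → Finset (Machine Γ) × Cfg Γ) (N : ℕ) : Prop :=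
  f 0 = (H, c0) ∧ ∀ i < N, OrchStep (f i) (f (i + 1))

def HaltsAtFrom {Γ : Type} [DecidableEq Γ] (H : Finset (Machine Γ)) (c0 : Cfg Γ)
    (f : ℕ → Finset (Machine Γ) × Cfg Γ) (N : ℕ) : Prop :=
  RunFrom H c0 f N ∧ survivors (f N) = ∅

abbrev Breed := Finset (Machine Bool)

def initCfg : Cfg Bool := ⟨0, fun _ => false, 0⟩

def Run (H : Breed) (f : ℕ → Breed × Cfg Bool) (N : ℕ) : Prop :=
  RunFrom H initCfg f N

def HaltsAt (H : Breed) (f : ℕ → Breed × Cfg Bool) (N : ℕ) : Prop :=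
  HaltsAtFrom H initCfg f N

def Halts (H : Breed) : Prop := ∃ f N, HaltsAt H f N

def Divergent (H : Breed) : Prop := ∀ K : ℕ, ∃ f N, K ≤ N ∧ Run H f N

def Convergent (H : Breed) : Prop :=
  ¬ ∃ f : ℕ → Breed × Cfg Bool, f 0 = (H, initCfg) ∧ ∀ i, OrchStep (f i) (f (i + 1))

def initCfg2 (w : List Bool) : Cfg (Option Bool) :=
  ⟨0, fun i => if i < 0 then none else w[i.toNat]?, 0⟩

abbrev Breed2 := Finset (Machine (Option Bool))

def Run2 (H : Breed2) (w : List Bool) (f : ℕ → Breed2 × Cfg (Option Bool)) (N : ℕ) : Prop :=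
  RunFrom H (initCfg2 w) f N

def HaltsAt2 (H : Breed2) (w : List Bool) (f : ℕ → Breed2 × Cfg (Option Bool)) (N : ℕ) : Prop :=
  HaltsAtFrom H (initCfg2 w) f N

def Lang2 (H : Breed2) : Set (List Bool) := {w | ∃ f N, HaltsAt2 H w f N}


/-- A rule set is deterministic: at most one right-hand side per left-hand side. -/
def DetM {Γ : Type} (G : Machine Γ) : Prop :=
  ∀ r ∈ G, ∀ r' ∈ G, r.1 = r'.1 → r.2 = r'.2

instance {Γ : Type} [DecidableEq Γ] (G : Machine Γ) : Decidable (DetM G) := by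
  unfold DetM; infer_instance

/-- A (partial) run of a nondeterministic Turing machine `U` from configuration `c0`. -/
def NDRunFrom {Γ : Type} [DecidableEq Γ] (U : Machine Γ) (c0 : Cfg Γ)
    (f : ℕ → Cfg Γ) (N : ℕ) : Prop :=
  f 0 = c0 ∧ ∀ i < N, ∃ T, ((f i).F, T) ∈ U ∧ f (i + 1) = applyRule (f i) T

/-- A halting computation of the NDTM `U`: after `N` steps no rule is applicable. -/
def NDHaltsAtFrom {Γ : Type} [DecidableEq Γ] (U : Machine Γ) (c0 : Cfg Γ)
    (f : ℕ → Cfg Γ) (N : ℕ) : Prop :=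
  NDRunFrom U c0 f N ∧ ¬ applicable (f N).F U

/-- `L ∈ NP`: some NDTM decides `L` with accepting (halting) computations of
length bounded by a polynomial in the input length. -/
def InNP (L : Set (List Bool)) : Prop :=
  ∃ (U : Machine (Option Bool)) (p : Polynomial ℕ),
    ∀ w, w ∈ L ↔ ∃ f N, NDHaltsAtFrom U (initCfg2 w) f N ∧ N ≤ p.eval w.length

/-- `L ∈ OM1P`: some finite breed of deterministic machines decides `L` by
orchestrated computations of polynomially bounded length. -/
def InOM1P (L : Set (List Bool)) : Prop :=
  ∃ (H : Breed2) (p : Polynomial ℕ), (∀ G ∈ H, DetM G) ∧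
    ∀ w, w ∈ L ↔ ∃ f N, HaltsAt2 H w f N ∧ N ≤ p.eval w.length

/-!
Every rule of a nondeterministic machine `U` lies in some deterministic resolution of `U`, and
every resolution has the same left-hand sides as `U`. Hence, orchestrating the breed of all
resolutions, no machine is discarded while `U` can still move, all of them are discarded exactly
when `U` halts, and an orchestrated step is exactly a step of `U`. Halting computations of `U` and
of the orchestrated machine therefore correspond with the same length, so the polynomial bound
witnessing `L ∈ NP` also witnesses `L ∈ OM1P`.
-/

variable {Γ : Type} [DecidableEq Γ]

/-- A resolution fixes one right-hand side per left-hand side of `U`; it is encoded as a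
deterministic submachine of `U` with the same left-hand sides. -/
def Resolutions (U : Machine Γ) : Finset (Machine Γ) :=
  U.powerset.filter fun G => DetM G ∧ ∀ r ∈ U, applicable r.1 G

theorem mem_resolutions {U G : Machine Γ} :
    G ∈ Resolutions U ↔ G ⊆ U ∧ DetM G ∧ ∀ r ∈ U, applicable r.1 G := by
  simp only [Resolutions, Finset.mem_filter, Finset.mem_powerset]

theorem applicable.mono {F : Stt × Γ} {G U : Machine Γ} (hGU : G ⊆ U) (h : applicable F G) :
    applicable F U :=
  let ⟨r, hr, hrF⟩ := h
  ⟨r, hGU hr, hrF⟩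

theorem exists_mem_resolutions_of_mem {U : Machine Γ} {r : Rule Γ} (hr : r ∈ U) :
    ∃ G ∈ Resolutions U, r ∈ G := by
  classical
  obtain ⟨pick, hpick, hpick_r⟩ : ∃ pick : Stt × Γ → Stt × Γ × Dir,
      (∀ s ∈ U, (s.1, pick s.1) ∈ U) ∧ pick r.1 = r.2 := by
    refine ⟨Function.update (fun F => if h : ∃ T, (F, T) ∈ U then h.choose else r.2) r.1 r.2,
      fun s hs => ?_, Function.update_self _ _ _⟩
    by_cases hsr : s.1 = r.1
    · simpa [hsr] using hr
    · have hex : ∃ T, (s.1, T) ∈ U := ⟨s.2, hs⟩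
      rw [Function.update_of_ne hsr, dif_pos hex]
      exact hex.choose_spec
  refine ⟨U.image fun s => (s.1, pick s.1), mem_resolutions.2 ⟨?_, ?_, ?_⟩, ?_⟩
  · intro x hx
    obtain ⟨s, hs, rfl⟩ := Finset.mem_image.1 hx
    exact hpick s hs
  · intro x hx y hy hxy
    obtain ⟨a, -, rfl⟩ := Finset.mem_image.1 hx
    obtain ⟨b, -, rfl⟩ := Finset.mem_image.1 hy
    exact congrArg pick hxy
  · exact fun s hs => ⟨_, Finset.mem_image_of_mem _ hs, rfl⟩
  · exact Finset.mem_image.2 ⟨r, hr, by rw [hpick_r]⟩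

theorem survivors_resolutions_of_applicable {U : Machine Γ} {c : Cfg Γ}
    (h : applicable c.F U) : survivors (Resolutions U, c) = Resolutions U := by
  refine Finset.filter_true_of_mem fun G hG => ?_
  obtain ⟨r, hr, hrF⟩ := h
  exact hrF ▸ (mem_resolutions.1 hG).2.2 r hr

theorem survivors_resolutions_eq_empty_iff {U : Machine Γ} {c : Cfg Γ} :
    survivors (Resolutions U, c) = ∅ ↔ ¬ applicable c.F U := by
  refine ⟨fun h hU => ?_, fun h => Finset.filter_false_of_mem fun G hG hG' =>
    h (hG'.mono (mem_resolutions.1 hG).1)⟩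
  obtain ⟨r, hr, hrF⟩ := hU
  obtain ⟨G, hG, hrG⟩ := exists_mem_resolutions_of_mem hr
  have hsurv : G ∈ survivors (Resolutions U, c) := Finset.mem_filter.2 ⟨hG, r, hrG, hrF⟩
  exact Finset.notMem_empty G (h ▸ hsurv)

theorem orchStep_resolutions_iff {U : Machine Γ} {c : Cfg Γ} {q : Finset (Machine Γ) × Cfg Γ} :
    OrchStep (Resolutions U, c) q ↔ ∃ T, (c.F, T) ∈ U ∧ q = (Resolutions U, applyRule c T) := by
  constructor
  · rintro ⟨G, hG, T, hT, rfl⟩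
    have hGU := (mem_resolutions.1 (Finset.mem_filter.1 hG).1).1
    rw [survivors_resolutions_of_applicable ⟨_, hGU hT, rfl⟩]
    exact ⟨T, hGU hT, rfl⟩
  · rintro ⟨T, hT, rfl⟩
    obtain ⟨G, hG, hTG⟩ := exists_mem_resolutions_of_mem hT
    have hsurv := survivors_resolutions_of_applicable (c := c) ⟨_, hT, rfl⟩
    exact ⟨G, hsurv.symm ▸ hG, T, hTG, by rw [hsurv]⟩

theorem runFrom_congr {H : Finset (Machine Γ)} {c0 : Cfg Γ}
    {g g' : ℕ → Finset (Machine Γ) × Cfg Γ} {N : ℕ} (h : ∀ i ≤ N, g i = g' i) :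
    RunFrom H c0 g N ↔ RunFrom H c0 g' N := by
  unfold RunFrom
  rw [h 0 N.zero_le]
  refine and_congr_right fun _ => forall₂_congr fun i hi => ?_
  rw [h i hi.le, h (i + 1) hi]

theorem RunFrom.eq_resolutions {U : Machine Γ} {c0 : Cfg Γ}
    {g : ℕ → Finset (Machine Γ) × Cfg Γ} {N : ℕ} (hg : RunFrom (Resolutions U) c0 g N) :
    ∀ i ≤ N, g i = (Resolutions U, (g i).2) := by
  intro i hi
  induction i with
  | zero => rw [hg.1]
  | succ i ih =>
    have hstep := hg.2 i hi
    rw [ih (Nat.le_of_succ_le hi), orchStep_resolutions_iff] at hstep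
    obtain ⟨T, -, hT⟩ := hstep
    rw [hT]

theorem runFrom_resolutions_iff {U : Machine Γ} {c0 : Cfg Γ} {f : ℕ → Cfg Γ} {N : ℕ} :
    RunFrom (Resolutions U) c0 (fun i => (Resolutions U, f i)) N ↔ NDRunFrom U c0 f N := by
  simp only [RunFrom, NDRunFrom, orchStep_resolutions_iff, Prod.mk.injEq, true_and]

theorem exists_haltsAtFrom_resolutions_iff (U : Machine Γ) (c0 : Cfg Γ) (N : ℕ) :
    (∃ g, HaltsAtFrom (Resolutions U) c0 g N) ↔ ∃ f, NDHaltsAtFrom U c0 f N := by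
  constructor
  · rintro ⟨g, hrun, hhalt⟩
    have hg := hrun.eq_resolutions
    refine ⟨fun i => (g i).2, runFrom_resolutions_iff.1 ((runFrom_congr hg).1 hrun), ?_⟩
    rw [hg N le_rfl] at hhalt
    exact survivors_resolutions_eq_empty_iff.1 hhalt
  · rintro ⟨f, hrun, hhalt⟩
    exact ⟨_, runFrom_resolutions_iff.2 hrun, survivors_resolutions_eq_empty_iff.2 hhalt⟩

/-- `NP ⊆ OM1P`: every decision problem in NP is solvable by
an orchestrated machine in polynomial time. -/
theorem NP_subset_OM1P : ∀ L : Set (List Bool), InNP L → InOM1P L := by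
  rintro L ⟨U, p, hU⟩
  refine ⟨Resolutions U, p, fun G hG => (mem_resolutions.1 hG).2.1, fun w => ?_⟩
  rw [hU w]
  constructor
  · rintro ⟨f, N, hf, hN⟩
    obtain ⟨g, hg⟩ := (exists_haltsAtFrom_resolutions_iff U _ N).2 ⟨f, hf⟩
    exact ⟨g, N, hg, hN⟩
  · rintro ⟨g, N, hg, hN⟩
    obtain ⟨f, hf⟩ := (exists_haltsAtFrom_resolutions_iff U _ N).1 ⟨g, hg⟩
    exact ⟨f, N, hf, hN⟩
end

section
/- Let X be the Turing machine recognizing (01)^n and Y the machine recognizing (10)^n (with transition rules as specified). Then 0110 is in neither L(X) nor L(Y), but 0110 ∈ L(OrchMach2({X, Y})): there is a computation of the orchestrated machine on input 0110 that halts, interleaving rules of X and Y. -/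
/-- The machine `X` recognizing `(01)ⁿ`; state `2` plays the role of the
non-halting sink state `∞`. -/
def X : Machine (Option Bool) :=
  {((0, some false), (1, some false, (2 : Dir))),
   ((0, some true), (2, some true, (1 : Dir))),
   ((1, some true), (0, some true, (2 : Dir))),
   ((1, some false), (2, some true, (1 : Dir))),
   ((1, none), (2, some true, (1 : Dir))),
   ((2, some true), (2, some true, (1 : Dir)))}

/-- The machine `Y` recognizing `(10)ⁿ`; state `2` plays the role of `∞`. -/
def Y : Machine (Option Bool) :=
  {((0, some true), (1, some true, (2 : Dir))),
   ((0, some false), (2, some true, (1 : Dir))),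
   ((1, some false), (0, some false, (2 : Dir))),
   ((1, some true), (2, some true, (1 : Dir))),
   ((1, none), (2, some true, (1 : Dir))),
   ((2, some true), (2, some true, (1 : Dir)))}

/-- The input word `0110`. -/
def w0110 : List Bool := [false, true, true, false]

/-! Alone, `X` reads `01` and then meets the second `1` in state `0`, while `Y` meets the leading
`0` in state `0`; either way the machine moves to the sink state, whose rule on `1` leaves the
configuration unchanged, so the run never halts. Together, `X` reads `01`, `Y` reads `10`, and
in state `0` on the blank neither machine has a rule. -/

section Orchestration

variable {Γ : Type}

def IsDeterministic (M : Machine Γ) : Prop :=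
  ∀ r ∈ M, ∀ r' ∈ M, r.1 = r'.1 → r = r'

theorem IsDeterministic.action_eq {M : Machine Γ} (hM : IsDeterministic M) {F : Stt × Γ}
    {T T' : Stt × Γ × Dir} (hT : (F, T) ∈ M) (hT' : (F, T') ∈ M) : T = T' :=
  congrArg Prod.snd (hM _ hT _ hT' rfl)

theorem Cfg.F_applyRule_stay (c : Cfg Γ) (s : Stt) (a : Γ) :
    (applyRule c (s, a, 1)).F = (s, a) := by
  simp [applyRule, Cfg.F, moveInt]

/-- `EntersLoop M s a c`: some run of `M` from `c` reaches state `s` reading `a`, where the rule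
`((s, a), (s, a, 1))` then loops forever. -/
inductive EntersLoop (M : Machine Γ) (s : Stt) (a : Γ) : Cfg Γ → Prop
  | loop {c : Cfg Γ} : c.F = (s, a) → EntersLoop M s a c
  | step {c : Cfg Γ} (T : Stt × Γ × Dir) :
      (c.F, T) ∈ M → EntersLoop M s a (applyRule c T) → EntersLoop M s a c

namespace EntersLoop

variable {M : Machine Γ} {s : Stt} {a : Γ} {c : Cfg Γ}

theorem applyRule (hM : IsDeterministic M) (hloop : ((s, a), (s, a, 1)) ∈ M)
    {T : Stt × Γ × Dir} (hT : (c.F, T) ∈ M) : EntersLoop M s a c →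
    EntersLoop M s a (_root_.applyRule c T)
  | loop hc => by
    rw [hc] at hT
    rw [← hM.action_eq hloop hT]
    exact loop (c.F_applyRule_stay s a)
  | step _ hT' hnext => by
    rwa [hM.action_eq hT hT']

theorem applicable_F [DecidableEq Γ] (hloop : ((s, a), (s, a, 1)) ∈ M) :
    EntersLoop M s a c → applicable c.F M
  | loop hc => ⟨_, hloop, hc.symm⟩
  | step _ hT _ => ⟨_, hT, rfl⟩

end EntersLoop

variable [DecidableEq Γ]

theorem survivors_singleton {M : Machine Γ} {c : Cfg Γ} (h : applicable c.F M) :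
    survivors ({M}, c) = {M} := by
  simp [survivors, Finset.filter_singleton, h]

theorem not_haltsAtFrom_of_entersLoop {M : Machine Γ} {s : Stt} {a : Γ} {c₀ : Cfg Γ}
    (hM : IsDeterministic M) (hloop : ((s, a), (s, a, 1)) ∈ M) (hc₀ : EntersLoop M s a c₀)
    (f : ℕ → Finset (Machine Γ) × Cfg Γ) (N : ℕ) : ¬ HaltsAtFrom {M} c₀ f N := by
  rintro ⟨⟨hf0, hsteps⟩, hhalt⟩
  have hinv : ∀ i ≤ N, ∃ c, f i = ({M}, c) ∧ EntersLoop M s a c := by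
    intro i
    induction i with
    | zero => exact fun _ => ⟨c₀, hf0, hc₀⟩
    | succ i ih =>
      intro hi
      obtain ⟨c, hfi, hc⟩ := ih (by omega)
      obtain ⟨G, hG, T, hT, hnext⟩ := hsteps i (by omega)
      rw [hfi, survivors_singleton (hc.applicable_F hloop)] at hG hnext
      rw [Finset.mem_singleton.mp hG, hfi] at hT
      exact ⟨_, hnext, hc.applyRule hM hloop hT⟩
  obtain ⟨c, hfN, hc⟩ := hinv N le_rfl
  rw [hfN, survivors_singleton (hc.applicable_F hloop)] at hhalt
  exact Finset.singleton_ne_empty M hhalt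

def traceRun (H : Finset (Machine Γ)) (c₀ : Cfg Γ) (acts : List (Stt × Γ × Dir)) (i : ℕ) :
    Finset (Machine Γ) × Cfg Γ :=
  (H, (acts.take i).foldl applyRule c₀)

/-- Every machine of `H` must stay applicable, so that the breed does not shrink along the run. -/
theorem haltsAtFrom_traceRun {H : Finset (Machine Γ)} {c₀ : Cfg Γ}
    {acts : List (Stt × Γ × Dir)}
    (hstep : ∀ i (hi : i < acts.length), (∀ G ∈ H, applicable (traceRun H c₀ acts i).2.F G) ∧
      ∃ G ∈ H, ((traceRun H c₀ acts i).2.F, acts[i]) ∈ G)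
    (hhalt : ∀ G ∈ H, ¬ applicable (acts.foldl applyRule c₀).F G) :
    HaltsAtFrom H c₀ (traceRun H c₀ acts) acts.length := by
  refine ⟨⟨rfl, fun i hi => ?_⟩, ?_⟩
  · obtain ⟨hall, G, hG, hT⟩ := hstep i hi
    have hsurv : survivors (traceRun H c₀ acts i) = H := Finset.filter_true_of_mem hall
    refine ⟨G, hsurv.symm ▸ hG, acts[i], hT, ?_⟩
    rw [hsurv]
    simp only [traceRun, List.take_add_one, List.getElem?_eq_getElem hi, Option.toList_some,
      List.foldl_append, List.foldl_cons, List.foldl_nil]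
  · simpa [survivors, traceRun] using hhalt

end Orchestration

theorem X_isDeterministic : IsDeterministic X := by unfold IsDeterministic; decide

theorem Y_isDeterministic : IsDeterministic Y := by unfold IsDeterministic; decide

/-- `0110` is in neither `L(X)` nor `L(Y)`, but
`0110 ∈ L(OrchMach2({X, Y}))`: some computation of the orchestrated machine on
input `0110`, interleaving rules of `X` and `Y`, halts. -/
theorem zero_one_one_zero :
    w0110 ∉ Lang2 {X} ∧ w0110 ∉ Lang2 {Y} ∧ w0110 ∈ Lang2 ({X, Y} : Breed2) := by
  refine ⟨?_, ?_, ?_⟩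
  · rintro ⟨f, N, h⟩
    refine not_haltsAtFrom_of_entersLoop X_isDeterministic (s := 2) (a := some true)
      (by decide) ?_ f N h
    exact .step (1, some false, 2) (by decide) <| .step (0, some true, 2) (by decide) <|
      .step (2, some true, 1) (by decide) <| .loop (by decide)
  · rintro ⟨f, N, h⟩
    refine not_haltsAtFrom_of_entersLoop Y_isDeterministic (s := 2) (a := some true)
      (by decide) ?_ f N h
    exact .step (2, some true, 1) (by decide) <| .loop (by decide)
  · -- two rules of `X`, then two rules of `Y`
    exact ⟨_, _, haltsAtFrom_traceRun
      (acts := [(1, some false, 2), (0, some true, 2), (1, some true, 2), (0, some false, 2)])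
      (by decide) (by decide)⟩
end
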